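/- arXiv:2007.14483 — 2 statements merged into one kernel-verified Lean document; each statement's English description precedes it below -/
import Mathlib

section
/- In a commutative idempotent involutive residuated lattice, for every element x and all y, z in the interval B_x := {w | 0_x · w = 0_x and w · 1_x = w} (i.e., 0_x ⊑ w ⊑ 1_x in the monoidal order), one has y · z = y ∧ z. -/
/-- A commutative idempotent involutive residuated lattice. -/
class CIdInRL (α : Type*) extends Lattice α, CommMonoid α, Zero α where
  arrow : α → α → α
  residuation : ∀ x y z : α, x * y ≤ z ↔ y ≤ arrow x z
  idem : ∀ x : α, x * x = x
  involutive : ∀ x : α, arrow (arrow x 0) 0 = x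

namespace CIdInRL
variable {α : Type*} [CIdInRL α]
/-- linear negation ¬x := x → 0 -/
def neg (x : α) : α := arrow x 0
/-- 0_x := x ∧ ¬x -/
def zx (x : α) : α := x ⊓ neg x
/-- 1_x := x ∨ ¬x -/
def ox (x : α) : α := x ⊔ neg x
/-- monoidal order x ⊑ y iff x·y = x -/
def mleq (x y : α) : Prop := x * y = x
end CIdInRL

/-! Every `w` with `0_x ⊑ w` lies below `¬0_x = 1_x` in the lattice order, since `0_x · w = 0_x ≤ 0`.
Hence for `y, z ∈ B_x` monotonicity gives `y · z ≤ y · 1_x = y` and likewise `y · z ≤ z`, while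
`y ∧ z = (y ∧ z)(y ∧ z) ≤ y · z` by idempotence. -/

namespace CIdInRL
variable {α : Type*} [CIdInRL α]

lemma mul_le_mul_left' {a b : α} (h : a ≤ b) (c : α) : c * a ≤ c * b := by
  rw [residuation]
  exact h.trans ((residuation c b (c * b)).mp le_rfl)

lemma mul_neg_le_zero (a : α) : a * neg a ≤ 0 :=
  (residuation a (neg a) 0).mpr le_rfl

lemma neg_neg (a : α) : neg (neg a) = a :=
  involutive a

lemma neg_anti {a b : α} (h : a ≤ b) : neg b ≤ neg a := by
  change neg b ≤ arrow a 0
  rw [← residuation, mul_comm]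
  exact (mul_le_mul_left' h _).trans (mul_comm b (neg b) ▸ mul_neg_le_zero b)

def negOrderIso : α ≃o αᵒᵈ where
  toFun a := OrderDual.toDual (neg a)
  invFun a := neg (OrderDual.ofDual a)
  left_inv := neg_neg
  right_inv := neg_neg (α := α)
  map_rel_iff' {a b} :=
    ⟨fun h => by simpa only [neg_neg] using neg_anti (a := neg b) (b := neg a) h, neg_anti⟩

lemma neg_inf (a b : α) : neg (a ⊓ b) = neg a ⊔ neg b :=
  negOrderIso.map_inf a b

lemma inf_le_mul (a b : α) : a ⊓ b ≤ a * b :=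
  calc a ⊓ b = (a ⊓ b) * (a ⊓ b) := (idem _).symm
    _ ≤ (a ⊓ b) * b := mul_le_mul_left' inf_le_right _
    _ = b * (a ⊓ b) := mul_comm _ _
    _ ≤ b * a := mul_le_mul_left' inf_le_left _
    _ = a * b := mul_comm _ _

lemma zx_le_zero (x : α) : zx x ≤ 0 :=
  (inf_le_mul x (neg x)).trans (mul_neg_le_zero x)

lemma neg_zx (x : α) : neg (zx x) = ox x := by
  rw [zx, neg_inf, neg_neg, ox, sup_comm]

lemma le_ox_of_mleq_zx {x w : α} (h : mleq (zx x) w) : w ≤ ox x := by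
  rw [← neg_zx, neg, ← residuation, h]
  exact zx_le_zero x

lemma mul_le_of_le_of_mleq {a b c : α} (hb : b ≤ c) (ha : mleq a c) : a * b ≤ a :=
  (mul_le_mul_left' hb a).trans ha.le

end CIdInRL

open CIdInRL in
theorem stmt2 {α : Type*} [CIdInRL α] (x y z : α)
    (hy : mleq (zx x) y ∧ mleq y (ox x)) (hz : mleq (zx x) z ∧ mleq z (ox x)) :
    y * z = y ⊓ z := by
  refine le_antisymm (le_inf ?_ ?_) (inf_le_mul y z)
  · exact mul_le_of_le_of_mleq (le_ox_of_mleq_zx hz.1) hy.2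
  · rw [mul_comm]
    exact mul_le_of_le_of_mleq (le_ox_of_mleq_zx hy.1) hz.2
end

section
/- In a commutative idempotent involutive residuated lattice, for a negative element a with a ≤ 1 but a ≰ 0, the sets {x | a·x = a} and {¬x | a·x = a} are disjoint. -/
namespace CIdInRL

variable {α : Type*} [CIdInRL α]

theorem mul_neg_self_le_zero (x : α) : x * neg x ≤ 0 :=
  (residuation x (neg x) 0).mpr le_rfl

theorem one_le_arrow_self (z : α) : 1 ≤ arrow z z :=
  (residuation z 1 z).mp (mul_one z).le

theorem mul_le_of_le_one {a : α} (ha : a ≤ 1) (z : α) : a * z ≤ z := by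
  rw [mul_comm]
  exact (residuation z a z).mpr (ha.trans (one_le_arrow_self z))

theorem le_zero_of_mul_eq_of_mul_neg_eq {a x : α} (ha : a ≤ 1) (hx : a * x = a)
    (hnx : a * neg x = a) : a ≤ 0 :=
  calc a = a * (x * neg x) := by rw [← mul_assoc, hx, hnx]
    _ ≤ x * neg x := mul_le_of_le_one ha _
    _ ≤ 0 := mul_neg_self_le_zero x

end CIdInRL

open CIdInRL in
theorem stmt17 {α : Type*} [CIdInRL α] (a : α) (ha : a ≤ 1) (ha0 : ¬ a ≤ 0) :
    Disjoint {x : α | a * x = a} {y : α | ∃ x : α, a * x = a ∧ y = neg x} := by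
  rw [Set.disjoint_left]
  rintro _ hnx ⟨x, hx, rfl⟩
  exact ha0 (le_zero_of_mul_eq_of_mul_neg_eq ha hx hnx)
end
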